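/- For every norm ⦀·⦀ on ℝ^d and every function φ : {0,…,d} → ℝ̄: (i) the Capra biconjugate of φ∘ℓ0 satisfies (φ∘ℓ0)^{¢¢'}(x) = ((φ∘ℓ0)^¢)^★( x/⦀x⦀ ) for all x ≠ 0, where ((φ∘ℓ0)^¢)^★ denotes the Fenchel conjugate of the Capra conjugate; (ii) the closed convex function ((φ∘ℓ0)^¢)^★ equals the Fenchel biconjugate of the function x ↦ inf{ φ(l) : l ∈ {0,…,d}, x ∈ B_l } and also equals the Fenchel biconjugate of the function x ↦ inf{ φ(l) : l ∈ {0,…,d}, x ∈ S_l }, with the conventions B_0 = S_0 = {0} and inf ∅ = +∞. -/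

import Mathlib

/-!
The Capra conjugate of `φ ∘ ℓ0` and the Fenchel conjugates of both functions in (ii) are all equal
to `y ↦ sup_{l ≤ d} (⦀y⦀_{l,★} ∔ (−φ l))`.
On the Capra side, `¢(x, y) = ⟨x / ⦀x⦀, y⟩`, so the supremum of `¢(·, y)` over the level set
`{ℓ0 = l}` is the support function of the sparse unit ball `{ℓ0 ≤ l, ⦀·⦀ ≤ 1}`, which is
`⦀y⦀_{l,★}` (vectors with `ℓ0 < l` are limits of vectors with `ℓ0 = l`).
On the Fenchel side, `⦀·⦀_{l,★}` is also the support function of `B_l` and of `S_l`: the sparse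
unit ball lies in `B_l`, and `⟨x, y⟩ ≤ ⦀x⦀_l ⦀y⦀_{l,★}`. Item (i) is the identity
`¢(x, y) = ⟨y, x / ⦀x⦀⟩`.
-/

open scoped BigOperators

noncomputable section

/-- The Euclidean pairing `⟨x,y⟩ = ∑ i, x i * y i` on `Fin d → ℝ`. -/
def dotp {d : ℕ} (x y : Fin d → ℝ) : ℝ := ∑ i, x i * y i

/-- The coordinate subspace `R_K` of vectors vanishing outside `K`. -/
def RK {d : ℕ} (K : Finset (Fin d)) : Set (Fin d → ℝ) := {x | ∀ j ∉ K, x j = 0}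

/-- Orthogonal projection onto `R_K`. -/
def projK {d : ℕ} (K : Finset (Fin d)) (x : Fin d → ℝ) : Fin d → ℝ :=
  fun i => if i ∈ K then x i else 0

/-- The ℓ0 pseudonorm: number of nonzero components. -/
def ell0 {d : ℕ} (x : Fin d → ℝ) : ℕ := (Function.support x).ncard

/-- `N` is a norm on `ℝ^d`. -/
structure IsNorm {d : ℕ} (N : (Fin d → ℝ) → ℝ) : Prop where
  eq_zero_iff : ∀ x, N x = 0 ↔ x = 0
  smul : ∀ (c : ℝ) (x : Fin d → ℝ), N (c • x) = |c| * N x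
  triangle : ∀ x y, N (x + y) ≤ N x + N y

/-- `⦀y⦀_{K,★}`: the dual norm (w.r.t. the Euclidean pairing), on the subspace `R_K`,
of the restriction of `N` to `R_K`. -/
def restStar {d : ℕ} (N : (Fin d → ℝ) → ℝ) (K : Finset (Fin d)) (y : Fin d → ℝ) : ℝ :=
  sSup {r | ∃ x ∈ RK K, N x ≤ 1 ∧ r = dotp x y}

/-- The dual coordinate-k norm `⦀y⦀_{k,★} = sup_{|K| ≤ k} ⦀y_K⦀_{K,★}`. -/
def dualCoord {d : ℕ} (N : (Fin d → ℝ) → ℝ) (k : ℕ) (y : Fin d → ℝ) : ℝ :=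
  sSup {r | ∃ K : Finset (Fin d), K.card ≤ k ∧ r = restStar N K (projK K y)}

/-- The coordinate-k norm: the dual norm of the dual coordinate-k norm. -/
def coordNorm {d : ℕ} (N : (Fin d → ℝ) → ℝ) (k : ℕ) (x : Fin d → ℝ) : ℝ :=
  sSup {r | ∃ y : Fin d → ℝ, dualCoord N k y ≤ 1 ∧ r = dotp x y}

/-- The Capra coupling `¢(x,y) = ⟨x,y⟩/⦀x⦀` (with `¢(0,y) = 0`). -/
def capra {d : ℕ} (N : (Fin d → ℝ) → ℝ) (x y : Fin d → ℝ) : ℝ :=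
  if x = 0 then 0 else dotp x y / N x

/-- Capra conjugate `f^¢(y) = sup_x ( ¢(x,y) ∔ (−f(x)) )`.
(EReal addition is the Moreau lower addition: `⊤ + ⊥ = ⊥`.) -/
def capraConj {d : ℕ} (N : (Fin d → ℝ) → ℝ) (f : (Fin d → ℝ) → EReal)
    (y : Fin d → ℝ) : EReal :=
  ⨆ x : Fin d → ℝ, ((capra N x y : ℝ) : EReal) + (- f x)

/-- Capra biconjugate `f^{¢¢'}(x) = sup_y ( ¢(x,y) ∔ (−f^¢(y)) )`. -/
def capraBiconj {d : ℕ} (N : (Fin d → ℝ) → ℝ) (f : (Fin d → ℝ) → EReal)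
    (x : Fin d → ℝ) : EReal :=
  ⨆ y : Fin d → ℝ, ((capra N x y : ℝ) : EReal) + (- capraConj N f y)

/-- Fenchel conjugate `g^★(y) = sup_x ( ⟨x,y⟩ ∔ (−g(x)) )`. -/
def fenchelConj {d : ℕ} (g : (Fin d → ℝ) → EReal) (y : Fin d → ℝ) : EReal :=
  ⨆ x : Fin d → ℝ, ((dotp x y : ℝ) : EReal) + (- g x)

/-- The unit ball of the coordinate-k norm, with the convention `B_0 = {0}`. -/
def coordBall {d : ℕ} (N : (Fin d → ℝ) → ℝ) (k : ℕ) : Set (Fin d → ℝ) :=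
  if k = 0 then {0} else {x | coordNorm N k x ≤ 1}

/-- The unit sphere of the coordinate-k norm, with the convention `S_0 = {0}`. -/
def coordSphere {d : ℕ} (N : (Fin d → ℝ) → ℝ) (k : ℕ) : Set (Fin d → ℝ) :=
  if k = 0 then {0} else {x | coordNorm N k x = 1}

/-- Fenchel biconjugate `g^{★★}(x) = sup_y ( ⟨x,y⟩ ∔ (−g^★(y)) )`. -/
def fenchelBiconj {d : ℕ} (g : (Fin d → ℝ) → EReal) (x : Fin d → ℝ) : EReal :=
  ⨆ y : Fin d → ℝ, ((dotp x y : ℝ) : EReal) + (- fenchelConj g y)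


open Finset Filter Topology
open scoped Pointwise

variable {d : ℕ}

section Dotp

lemma dotp_comm (x y : Fin d → ℝ) : dotp x y = dotp y x := dotProduct_comm x y

lemma dotp_smul_left (c : ℝ) (x y : Fin d → ℝ) : dotp (c • x) y = c * dotp x y :=
  smul_dotProduct c x y

lemma dotp_smul_right (c : ℝ) (x y : Fin d → ℝ) : dotp x (c • y) = c * dotp x y :=
  dotProduct_smul c x y

lemma dotp_neg_left (x y : Fin d → ℝ) : dotp (-x) y = -dotp x y := neg_dotProduct x y

lemma dotp_neg_right (x y : Fin d → ℝ) : dotp x (-y) = -dotp x y := dotProduct_neg x y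

lemma dotp_zero_left (y : Fin d → ℝ) : dotp 0 y = 0 := zero_dotProduct y

lemma dotp_zero_right (x : Fin d → ℝ) : dotp x 0 = 0 := dotProduct_zero x

lemma dotp_single_left (i : Fin d) (c : ℝ) (y : Fin d → ℝ) :
    dotp (Pi.single i c) y = c * y i :=
  single_dotProduct y c i

lemma continuous_dotp_left (y : Fin d → ℝ) : Continuous fun x : Fin d → ℝ => dotp x y :=
  continuous_id.dotProduct continuous_const

lemma dotp_le_sum_abs_mul {x y : Fin d → ℝ} {M : Fin d → ℝ} (hy : ∀ i, |y i| ≤ M i) :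
    dotp x y ≤ ∑ i, |x i| * M i :=
  calc dotp x y ≤ ∑ i, |x i * y i| := (le_abs_self _).trans (abs_sum_le_sum_abs _ _)
    _ ≤ ∑ i, |x i| * M i :=
      sum_le_sum fun i _ => (abs_mul _ _).trans_le (mul_le_mul_of_nonneg_left (hy i) (abs_nonneg _))

end Dotp

namespace IsNorm

variable {N : (Fin d → ℝ) → ℝ}

lemma zero (hN : IsNorm N) : N 0 = 0 := (hN.eq_zero_iff 0).2 rfl

lemma neg (hN : IsNorm N) (x : Fin d → ℝ) : N (-x) = N x := by
  simpa using hN.smul (-1) x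

lemma nonneg (hN : IsNorm N) (x : Fin d → ℝ) : 0 ≤ N x := by
  have h := hN.triangle x (-x)
  rw [hN.neg, add_neg_cancel, hN.zero] at h
  linarith

lemma pos (hN : IsNorm N) {x : Fin d → ℝ} (hx : x ≠ 0) : 0 < N x :=
  (hN.nonneg x).lt_of_ne fun h => hx ((hN.eq_zero_iff x).1 h.symm)

lemma le_sum_abs_mul (hN : IsNorm N) (x : Fin d → ℝ) :
    N x ≤ ∑ i, |x i| * N (Pi.single i 1) := by
  conv_lhs => rw [← Finset.univ_sum_single x]
  refine (le_sum_of_subadditive N hN.zero.le hN.triangle _ _).trans_eq (sum_congr rfl fun i _ => ?_)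
  rw [← hN.smul, ← Pi.single_smul', smul_eq_mul, mul_one]

lemma le_mul_norm (hN : IsNorm N) (x : Fin d → ℝ) :
    N x ≤ (∑ i, N (Pi.single i 1)) * ‖x‖ := by
  rw [sum_mul]
  exact (hN.le_sum_abs_mul x).trans (sum_le_sum fun i _ => by
    rw [mul_comm]
    exact mul_le_mul_of_nonneg_left (norm_le_pi_norm x i) (hN.nonneg _))

lemma continuous (hN : IsNorm N) : Continuous N := by
  refine (LipschitzWith.of_dist_le_mul (K := Real.toNNReal (∑ i, N (Pi.single i 1)))
    fun x y => ?_).continuous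
  rw [Real.coe_toNNReal _ (sum_nonneg fun i _ => hN.nonneg _), Real.dist_eq, dist_eq_norm]
  have hxy := hN.triangle (x - y) y
  have hyx := hN.triangle (y - x) x
  rw [sub_add_cancel] at hxy hyx
  have := hN.le_mul_norm (x - y)
  have := hN.le_mul_norm (y - x)
  rw [norm_sub_rev] at this
  exact abs_sub_le_iff.2 ⟨by linarith, by linarith⟩

lemma exists_norm_le_mul (hN : IsNorm N) : ∃ A : ℝ, ∀ x, ‖x‖ ≤ A * N x := by
  have hcont : ContinuousOn (fun x => (N x)⁻¹) (Metric.sphere (0 : Fin d → ℝ) 1) :=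
    hN.continuous.continuousOn.inv₀ fun x hx =>
      (hN.pos (ne_zero_of_mem_unit_sphere ⟨x, hx⟩)).ne'
  obtain ⟨A, hA⟩ := (isCompact_sphere (0 : Fin d → ℝ) 1).exists_bound_of_continuousOn hcont
  refine ⟨A, fun x => ?_⟩
  rcases eq_or_ne x 0 with rfl | hx
  · simp [hN.zero]
  have hx' : 0 < ‖x‖ := norm_pos_iff.2 hx
  have hmem : ‖x‖⁻¹ • x ∈ Metric.sphere (0 : Fin d → ℝ) 1 := by
    simp [norm_smul, hx'.ne']
  have h := hA _ hmem
  rw [hN.smul, abs_of_pos (inv_pos.2 hx'), mul_inv, inv_inv, ← div_eq_mul_inv,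
    Real.norm_of_nonneg (div_nonneg hx'.le (hN.nonneg x))] at h
  exact (div_le_iff₀ (hN.pos hx)).1 h

lemma bddAbove_dotp_image (hN : IsNorm N) (y : Fin d → ℝ) :
    BddAbove ((fun x => dotp x y) '' {x | N x ≤ 1}) := by
  obtain ⟨A, hA⟩ := hN.exists_norm_le_mul
  refine ⟨∑ i, |y i| * max A 0, ?_⟩
  rintro _ ⟨x, hx, rfl⟩
  show dotp x y ≤ _
  rw [dotp_comm]
  refine dotp_le_sum_abs_mul fun i => (norm_le_pi_norm x i).trans ((hA x).trans ?_)
  calc A * N x ≤ max A 0 * N x := mul_le_mul_of_nonneg_right (le_max_left _ _) (hN.nonneg x)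
    _ ≤ max A 0 := mul_le_of_le_one_right (le_max_right _ _) hx

end IsNorm

section Ell0

lemma ell0_eq_card_filter (x : Fin d → ℝ) : ell0 x = #{i | x i ≠ 0} := by
  rw [ell0, ← Set.ncard_coe_finset]
  congr 1
  ext i
  simp

lemma ell0_eq_zero_iff {x : Fin d → ℝ} : ell0 x = 0 ↔ x = 0 := by
  simp [ell0_eq_card_filter, filter_eq_empty_iff, funext_iff]

lemma ell0_le (x : Fin d → ℝ) : ell0 x ≤ d := by
  rw [ell0_eq_card_filter]
  exact (card_filter_le _ _).trans_eq (card_fin d)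

lemma ell0_smul {c : ℝ} (hc : c ≠ 0) (x : Fin d → ℝ) : ell0 (c • x) = ell0 x := by
  simp [ell0_eq_card_filter, hc]

lemma ell0_neg (x : Fin d → ℝ) : ell0 (-x) = ell0 x := by
  simpa using ell0_smul (neg_ne_zero.2 one_ne_zero) x

lemma ell0_single_le_one (i : Fin d) (c : ℝ) : ell0 (Pi.single i c) ≤ 1 :=
  (Set.ncard_le_ncard Pi.support_single_subset (Set.finite_singleton i)).trans_eq
    (Set.ncard_singleton i)

lemma ell0_le_iff_exists_mem_RK {x : Fin d → ℝ} {l : ℕ} :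
    ell0 x ≤ l ↔ ∃ K : Finset (Fin d), #K ≤ l ∧ x ∈ RK K := by
  rw [ell0_eq_card_filter]
  constructor
  · intro h
    exact ⟨_, h, fun j hj => by simpa using hj⟩
  · rintro ⟨K, hK, hx⟩
    refine (card_le_card fun i hi => ?_).trans hK
    by_contra hiK
    exact (mem_filter.1 hi).2 (hx i hiK)

lemma exists_ell0_add_smul_eq {x : Fin d → ℝ} {l : ℕ} (hxl : ell0 x ≤ l) (hld : l ≤ d) :
    ∃ w : Fin d → ℝ, ∀ t : ℝ, t ≠ 0 → ell0 (x + t • w) = l := by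
  have hcard : l - ell0 x ≤ #{i | x i = 0} := by
    have := card_filter_add_card_filter_not (s := univ) (fun i => x i = 0)
    rw [card_univ, Fintype.card_fin, ← ell0_eq_card_filter] at this
    omega
  obtain ⟨J, hJ, hJcard⟩ := exists_subset_card_eq hcard
  refine ⟨fun i => if i ∈ J then 1 else 0, fun t ht => ?_⟩
  have hsupp : #{i | (x + t • fun i => if i ∈ J then (1 : ℝ) else 0) i ≠ 0}
      = #(filter (fun i => x i ≠ 0) univ ∪ J) := by
    congr 1
    ext i
    by_cases hi : i ∈ J
    · simp [hi, (mem_filter.1 (hJ hi)).2, ht]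
    · simp [hi]
  have hdisj : Disjoint ({i | x i ≠ 0} : Finset (Fin d)) J :=
    disjoint_left.2 fun i hi hiJ => (mem_filter.1 hi).2 (mem_filter.1 (hJ hiJ)).2
  rw [ell0_eq_card_filter, hsupp, card_union_of_disjoint hdisj, hJcard, ← ell0_eq_card_filter]
  omega

end Ell0

/-- `sSup` gives the junk value `0` where `⟨·, y⟩` is unbounded above on `C`. -/
def supportFn (C : Set (Fin d → ℝ)) (y : Fin d → ℝ) : ℝ := sSup ((fun x => dotp x y) '' C)

section SupportFn

variable {C : Set (Fin d → ℝ)}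

lemma supportFn_smul_of_nonneg {c : ℝ} (hc : 0 ≤ c) (y : Fin d → ℝ) :
    supportFn C (c • y) = c * supportFn C y := by
  have himage : (fun x => dotp x (c • y)) '' C = c • (fun x => dotp x y) '' C := by
    rw [← Set.image_smul, Set.image_image]
    simp only [dotp_smul_right, smul_eq_mul]
  rw [supportFn, himage, Real.sSup_smul_of_nonneg hc, smul_eq_mul, supportFn]

lemma supportFn_neg (hC : ∀ x ∈ C, -x ∈ C) (y : Fin d → ℝ) :
    supportFn C (-y) = supportFn C y := by
  unfold supportFn
  congr 1
  ext r
  constructor <;> rintro ⟨x, hx, rfl⟩ <;>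
    exact ⟨-x, hC x hx, by simp only [dotp_neg_left, dotp_neg_right, neg_neg]⟩

lemma supportFn_smul (hC : ∀ x ∈ C, -x ∈ C) (c : ℝ) (y : Fin d → ℝ) :
    supportFn C (c • y) = |c| * supportFn C y := by
  rcases le_total 0 c with hc | hc
  · rw [abs_of_nonneg hc, supportFn_smul_of_nonneg hc]
  · rw [abs_of_nonpos hc, ← supportFn_smul_of_nonneg (neg_nonneg.2 hc), neg_smul,
      supportFn_neg hC]

lemma supportFn_nonneg (hC : 0 ∈ C) (y : Fin d → ℝ) : 0 ≤ supportFn C y := by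
  by_cases hbdd : BddAbove ((fun x => dotp x y) '' C)
  · simpa [supportFn, dotp_zero_left] using le_csSup hbdd ⟨0, hC, rfl⟩
  · rw [supportFn, Real.sSup_of_not_bddAbove hbdd]

end SupportFn

def sparseBall (N : (Fin d → ℝ) → ℝ) (l : ℕ) : Set (Fin d → ℝ) := {x | ell0 x ≤ l ∧ N x ≤ 1}

section DualCoord

variable {N : (Fin d → ℝ) → ℝ}

lemma zero_mem_sparseBall (hN : IsNorm N) (l : ℕ) : 0 ∈ sparseBall N l :=
  ⟨by simp [ell0_eq_zero_iff.2 rfl], by simp [hN.zero]⟩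

lemma neg_mem_sparseBall (hN : IsNorm N) {l : ℕ} {x : Fin d → ℝ} (hx : x ∈ sparseBall N l) :
    -x ∈ sparseBall N l :=
  ⟨(ell0_neg x).trans_le hx.1, (hN.neg x).trans_le hx.2⟩

lemma sparseBall_zero (hN : IsNorm N) : sparseBall N 0 = {0} := by
  ext x
  refine ⟨fun hx => ell0_eq_zero_iff.1 (Nat.le_zero.1 hx.1), fun hx => ?_⟩
  rw [Set.mem_singleton_iff.1 hx]
  exact zero_mem_sparseBall hN 0

lemma isLUB_supportFn_sparseBall (hN : IsNorm N) (l : ℕ) (y : Fin d → ℝ) :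
    IsLUB ((fun x => dotp x y) '' sparseBall N l) (supportFn (sparseBall N l) y) :=
  isLUB_csSup ⟨_, 0, zero_mem_sparseBall hN l, rfl⟩
    ((hN.bddAbove_dotp_image y).mono (Set.image_mono fun _ hx => hx.2))

lemma dotp_projK_of_mem_RK {K : Finset (Fin d)} {x : Fin d → ℝ} (hx : x ∈ RK K)
    (y : Fin d → ℝ) : dotp x (projK K y) = dotp x y :=
  sum_congr rfl fun i _ => by by_cases hi : i ∈ K <;> simp [projK, hi, hx i]

lemma restStar_projK (K : Finset (Fin d)) (y : Fin d → ℝ) :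
    restStar N K (projK K y) = sSup ((fun x => dotp x y) '' {x | x ∈ RK K ∧ N x ≤ 1}) := by
  unfold restStar
  congr 1
  ext r
  constructor
  · rintro ⟨x, hx, hxN, rfl⟩
    exact ⟨x, ⟨hx, hxN⟩, (dotp_projK_of_mem_RK hx y).symm⟩
  · rintro ⟨x, ⟨hx, hxN⟩, rfl⟩
    exact ⟨x, hx, hxN, (dotp_projK_of_mem_RK hx y).symm⟩

lemma dualCoord_eq_supportFn (hN : IsNorm N) (l : ℕ) :
    dualCoord N l = supportFn (sparseBall N l) := by
  funext y
  let S (K : {K : Finset (Fin d) // #K ≤ l}) : Set ℝ :=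
    (fun x => dotp x y) '' {x | x ∈ RK K ∧ N x ≤ 1}
  have hS (K : {K : Finset (Fin d) // #K ≤ l}) : IsLUB (S K) (restStar N K (projK K y)) := by
    rw [restStar_projK]
    exact isLUB_csSup ⟨0, 0, ⟨fun _ _ => rfl, by simp [hN.zero]⟩, dotp_zero_left y⟩
      ((hN.bddAbove_dotp_image y).mono (Set.image_mono fun _ hx => hx.2))
  have hunion : ⋃ K, S K = (fun x => dotp x y) '' sparseBall N l := by
    simp only [S, ← Set.image_iUnion]
    congr 1
    ext x
    simp only [Set.mem_iUnion, Set.mem_ofPred_eq, sparseBall, ell0_le_iff_exists_mem_RK,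
      Subtype.exists, exists_prop]
    tauto
  have hlub : IsLUB (Set.range fun K : {K : Finset (Fin d) // #K ≤ l} => restStar N K (projK K y))
      (supportFn (sparseBall N l) y) := by
    rw [isLUB_iUnion_iff_of_isLUB hS, hunion]
    exact isLUB_supportFn_sparseBall hN l y
  rw [dualCoord, ← hlub.csSup_eq ⟨_, ⟨∅, by simp⟩, rfl⟩]
  congr 1
  ext r
  constructor
  · rintro ⟨K, hK, rfl⟩
    exact ⟨⟨K, hK⟩, rfl⟩
  · rintro ⟨⟨K, hK⟩, rfl⟩
    exact ⟨K, hK, rfl⟩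

lemma isLUB_dualCoord (hN : IsNorm N) (l : ℕ) (y : Fin d → ℝ) :
    IsLUB ((fun x => dotp x y) '' sparseBall N l) (dualCoord N l y) := by
  rw [dualCoord_eq_supportFn hN]
  exact isLUB_supportFn_sparseBall hN l y

lemma dualCoord_nonneg (hN : IsNorm N) (l : ℕ) (y : Fin d → ℝ) : 0 ≤ dualCoord N l y := by
  rw [dualCoord_eq_supportFn hN]
  exact supportFn_nonneg (zero_mem_sparseBall hN l) y

lemma dualCoord_smul (hN : IsNorm N) (l : ℕ) (c : ℝ) (y : Fin d → ℝ) :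
    dualCoord N l (c • y) = |c| * dualCoord N l y := by
  rw [dualCoord_eq_supportFn hN]
  exact supportFn_smul (fun x => neg_mem_sparseBall hN) c y

lemma dualCoord_neg (hN : IsNorm N) (l : ℕ) (y : Fin d → ℝ) :
    dualCoord N l (-y) = dualCoord N l y := by
  simpa using dualCoord_smul hN l (-1) y

lemma abs_apply_le_mul_dualCoord (hN : IsNorm N) {l : ℕ} (hl : 1 ≤ l) (y : Fin d → ℝ)
    (i : Fin d) : |y i| ≤ N (Pi.single i 1) * dualCoord N l y := by
  have he : 0 < N (Pi.single i 1) := hN.pos (by simp)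
  have hsingle (c : ℝ) (hc : |c| = (N (Pi.single i 1))⁻¹) : c * y i ≤ dualCoord N l y := by
    refine (isLUB_dualCoord hN l y).1 ⟨Pi.single i c, ⟨(ell0_single_le_one i c).trans hl, ?_⟩,
      dotp_single_left i c y⟩
    rw [← mul_one c, ← smul_eq_mul, Pi.single_smul', hN.smul, hc, inv_mul_cancel₀ he.ne']
  have hpos := hsingle _ (abs_of_pos (inv_pos.2 he))
  have hneg := hsingle _ ((abs_neg _).trans (abs_of_pos (inv_pos.2 he)))
  rw [neg_mul, ← mul_neg] at hneg
  exact abs_le'.2 ⟨(inv_mul_le_iff₀ he).1 hpos, (inv_mul_le_iff₀ he).1 hneg⟩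

end DualCoord

section CoordNorm

variable {N : (Fin d → ℝ) → ℝ} {l : ℕ}

lemma coordNorm_eq_supportFn : coordNorm N l = supportFn {y | dualCoord N l y ≤ 1} := by
  funext x
  unfold coordNorm supportFn
  congr 1
  ext r
  constructor
  · rintro ⟨y, hy, rfl⟩
    exact ⟨y, hy, dotp_comm y x⟩
  · rintro ⟨y, hy, rfl⟩
    exact ⟨y, hy, dotp_comm y x⟩

lemma coordNorm_smul (hN : IsNorm N) (c : ℝ) (x : Fin d → ℝ) :
    coordNorm N l (c • x) = |c| * coordNorm N l x := by
  rw [coordNorm_eq_supportFn]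
  exact supportFn_smul (fun y hy => (dualCoord_neg hN l y).trans_le hy) c x

lemma coordNorm_neg (hN : IsNorm N) (x : Fin d → ℝ) : coordNorm N l (-x) = coordNorm N l x := by
  simpa using coordNorm_smul hN (-1) x

lemma dotp_le_coordNorm (hN : IsNorm N) (hl : 1 ≤ l) {y : Fin d → ℝ} (hy : dualCoord N l y ≤ 1)
    (x : Fin d → ℝ) : dotp x y ≤ coordNorm N l x := by
  have hbdd : BddAbove ((fun y => dotp y x) '' {y | dualCoord N l y ≤ 1}) := by
    refine ⟨∑ i, |x i| * N (Pi.single i 1), ?_⟩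
    rintro _ ⟨y, hy, rfl⟩
    show dotp y x ≤ _
    rw [dotp_comm]
    exact dotp_le_sum_abs_mul fun i => (abs_apply_le_mul_dualCoord hN hl y i).trans
      (mul_le_of_le_one_right (hN.nonneg _) hy)
  rw [coordNorm_eq_supportFn, dotp_comm]
  exact le_csSup hbdd ⟨y, hy, rfl⟩

lemma dotp_le_coordNorm_mul_dualCoord (hN : IsNorm N) (hl : 1 ≤ l) (x y : Fin d → ℝ) :
    dotp x y ≤ coordNorm N l x * dualCoord N l y := by
  rcases (dualCoord_nonneg hN l y).eq_or_lt with hD | hD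
  · have hy : y = 0 := funext fun i => abs_nonpos_iff.1 <| by
      simpa [← hD] using abs_apply_le_mul_dualCoord hN hl y i
    rw [← hD, mul_zero, hy]
    exact (dotp_zero_right x).le
  · have h := dotp_le_coordNorm hN hl (y := (dualCoord N l y)⁻¹ • y)
      (by rw [dualCoord_smul hN, abs_of_pos (inv_pos.2 hD), inv_mul_cancel₀ hD.ne']) x
    rw [dotp_smul_right, inv_mul_le_iff₀ hD] at h
    linarith

lemma coordNorm_le_one_of_mem_sparseBall (hN : IsNorm N) {x : Fin d → ℝ}
    (hx : x ∈ sparseBall N l) : coordNorm N l x ≤ 1 := by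
  rw [coordNorm_eq_supportFn]
  refine Real.sSup_le ?_ zero_le_one
  rintro _ ⟨y, hy, rfl⟩
  show dotp y x ≤ 1
  rw [dotp_comm]
  exact ((isLUB_dualCoord hN l y).1 ⟨x, hx, rfl⟩).trans hy

lemma coordNorm_pos_of_dotp_pos (hN : IsNorm N) (hl : 1 ≤ l) {x y : Fin d → ℝ}
    (h : 0 < dotp x y) : 0 < coordNorm N l x :=
  pos_of_mul_pos_left (h.trans_le (dotp_le_coordNorm_mul_dualCoord hN hl x y))
    (dualCoord_nonneg hN l y)

lemma coordNorm_inv_smul_self (hN : IsNorm N) {x : Fin d → ℝ} (hx : 0 < coordNorm N l x) :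
    coordNorm N l ((coordNorm N l x)⁻¹ • x) = 1 := by
  rw [coordNorm_smul hN, abs_of_pos (inv_pos.2 hx), inv_mul_cancel₀ hx.ne']

lemma isLUB_dotp_coordBall (hN : IsNorm N) (l : ℕ) (y : Fin d → ℝ) :
    IsLUB ((fun x => dotp x y) '' coordBall N l) (dualCoord N l y) := by
  rcases Nat.eq_zero_or_pos l with rfl | hl
  · rw [coordBall, if_pos rfl, ← sparseBall_zero hN]
    exact isLUB_dualCoord hN 0 y
  rw [coordBall, if_neg hl.ne']
  refine ⟨?_, fun b hb => (isLUB_dualCoord hN l y).2 <| upperBounds_mono_set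
    (Set.image_mono fun x hx => coordNorm_le_one_of_mem_sparseBall hN hx) hb⟩
  rintro _ ⟨x, hx, rfl⟩
  exact (dotp_le_coordNorm_mul_dualCoord hN hl x y).trans
    (mul_le_of_le_one_left (dualCoord_nonneg hN l y) hx)

lemma isLUB_dotp_coordSphere (hN : IsNorm N) (hld : l ≤ d) (y : Fin d → ℝ) :
    IsLUB ((fun x => dotp x y) '' coordSphere N l) (dualCoord N l y) := by
  rcases Nat.eq_zero_or_pos l with rfl | hl
  · rw [coordSphere, if_pos rfl, ← sparseBall_zero hN]
    exact isLUB_dualCoord hN 0 y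
  have hball := isLUB_dotp_coordBall hN l y
  rw [coordBall, if_neg hl.ne'] at hball
  rw [coordSphere, if_neg hl.ne']
  refine ⟨upperBounds_mono_set (Set.image_mono fun x hx => le_of_eq hx) hball.1,
    fun b hb => hball.2 ?_⟩
  have hb0 : 0 ≤ b := by
    let e : Fin d → ℝ := Pi.single ⟨0, by omega⟩ 1
    have he := coordNorm_pos_of_dotp_pos hN hl (x := e) (y := e) (by simp [e, dotp_single_left])
    have hz := coordNorm_inv_smul_self hN he
    have hpos := hb ⟨_, hz, rfl⟩
    have hneg := hb ⟨_, (coordNorm_neg hN _).trans hz, rfl⟩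
    simp only [dotp_neg_left] at hpos hneg
    linarith
  rintro _ ⟨x, hx, rfl⟩
  rcases le_or_gt (dotp x y) 0 with h | h
  · exact h.trans hb0
  have hc := coordNorm_pos_of_dotp_pos hN hl h
  calc dotp x y ≤ (coordNorm N l x)⁻¹ * dotp x y :=
        le_mul_of_one_le_left h.le ((one_le_inv₀ hc).2 hx)
    _ = dotp ((coordNorm N l x)⁻¹ • x) y := (dotp_smul_left _ x y).symm
    _ ≤ b := hb ⟨_, coordNorm_inv_smul_self hN hc, rfl⟩

end CoordNorm

section Capra

variable {N : (Fin d → ℝ) → ℝ} {l : ℕ}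

lemma capra_eq_div (x y : Fin d → ℝ) : capra N x y = dotp x y / N x := by
  unfold capra
  split_ifs with hx
  · rw [hx, dotp_zero_left, zero_div]
  · rfl

/-- Vectors with `ℓ0 = l` accumulate at every nonzero `x` with `ℓ0 x ≤ l`, and `¢(·, y)` is
continuous away from `0`. -/
lemma capra_le_of_ell0_le (hN : IsNorm N) (hld : l ≤ d) {y : Fin d → ℝ} {b : ℝ}
    (hb : ∀ z, ell0 z = l → capra N z y ≤ b) {x : Fin d → ℝ} (hx : x ≠ 0) (hxl : ell0 x ≤ l) :
    capra N x y ≤ b := by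
  obtain ⟨w, hw⟩ := exists_ell0_add_smul_eq hxl hld
  have hpath : Continuous fun t : ℝ => x + t • w := by fun_prop
  have hcont : ContinuousAt (fun t : ℝ => dotp (x + t • w) y / N (x + t • w)) 0 :=
    ((continuous_dotp_left y).comp hpath).continuousAt.div (hN.continuous.comp hpath).continuousAt
      (by simpa using (hN.pos hx).ne')
  have hlim : Tendsto (fun t : ℝ => capra N (x + t • w) y) (𝓝[≠] 0) (𝓝 (capra N x y)) := by
    simpa [capra_eq_div] using hcont.tendsto.mono_left nhdsWithin_le_nhds
  exact le_of_tendsto hlim (eventually_nhdsWithin_of_forall fun t ht => hb _ (hw t ht))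

lemma isLUB_capra_ell0_eq (hN : IsNorm N) (hld : l ≤ d) (y : Fin d → ℝ) :
    IsLUB ((fun x => capra N x y) '' {x | ell0 x = l}) (dualCoord N l y) := by
  refine ⟨?_, fun b hb => ?_⟩
  · rintro _ ⟨x, hx, rfl⟩
    rcases eq_or_ne x 0 with rfl | hx0
    · simpa [capra] using dualCoord_nonneg hN l y
    have hNx := hN.pos hx0
    have hmem : (N x)⁻¹ • x ∈ sparseBall N l :=
      ⟨(ell0_smul (inv_ne_zero hNx.ne') x).trans_le hx.le,
        by rw [hN.smul, abs_of_pos (inv_pos.2 hNx), inv_mul_cancel₀ hNx.ne']⟩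
    calc capra N x y = dotp ((N x)⁻¹ • x) y := by
          rw [capra_eq_div, dotp_smul_left, div_eq_inv_mul]
      _ ≤ dualCoord N l y := (isLUB_dualCoord hN l y).1 ⟨_, hmem, rfl⟩
  have hb' (z : Fin d → ℝ) (hz : ell0 z = l) : capra N z y ≤ b := hb ⟨z, hz, rfl⟩
  have hb0 : 0 ≤ b := by
    obtain ⟨w, hw⟩ := exists_ell0_add_smul_eq (x := 0) (by simp [ell0_eq_zero_iff.2]) hld
    have h1 := hb' _ (hw 1 one_ne_zero)
    have h2 := hb' _ (hw (-1) (by norm_num))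
    simp only [zero_add, one_smul, neg_smul, capra_eq_div, hN.neg, dotp_neg_left, neg_div] at h1 h2
    linarith
  rw [dualCoord_eq_supportFn hN]
  refine Real.sSup_le ?_ hb0
  rintro _ ⟨x, hx, rfl⟩
  rcases le_or_gt (dotp x y) 0 with h | h
  · exact h.trans hb0
  have hx0 : x ≠ 0 := by
    rintro rfl
    simp [dotp_zero_left] at h
  calc dotp x y ≤ dotp x y / N x := le_div_self h.le (hN.pos hx0) hx.2
    _ = capra N x y := (capra_eq_div x y).symm
    _ ≤ b := capra_le_of_ell0_le hN hld hb' hx0 hx.1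

end Capra

section Conjugates

lemma biSup_coe_add_eq_of_isLUB {α : Type*} {A : Set α} {g : α → ℝ} {c : ℝ}
    (h : IsLUB (g '' A) c) (e : EReal) : ⨆ x ∈ A, ((g x : EReal) + e) = (c : EReal) + e := by
  refine le_antisymm
    (iSup₂_le fun x hx => add_le_add (EReal.coe_le_coe_iff.2 (h.1 ⟨x, hx, rfl⟩)) le_rfl) ?_
  refine EReal.add_le_of_forall_lt fun a ha b hb => ?_
  obtain ⟨r, har, hrc⟩ := EReal.lt_iff_exists_real_btwn.1 ha
  obtain ⟨_, ⟨x, hx, rfl⟩, hrx, -⟩ := h.exists_between (EReal.coe_lt_coe_iff.1 hrc)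
  exact (add_le_add (har.trans (EReal.coe_lt_coe_iff.2 hrx)).le hb.le).trans
    (le_iSup₂_of_le x hx le_rfl)

lemma iSup_eq_iSup_fin_biSup {α β : Type*} [CompleteLattice β] {n : ℕ} (f : α → ℕ)
    (hf : ∀ x, f x ≤ n) (F : α → ℕ → β) :
    ⨆ x, F x (f x) = ⨆ l : Fin (n + 1), ⨆ x ∈ {x | f x = l}, F x l := by
  refine le_antisymm (iSup_le fun x => ?_) (iSup_le fun l => iSup₂_le fun x hx => ?_)
  · exact le_iSup_of_le ⟨f x, Nat.lt_succ_of_le (hf x)⟩ (le_iSup₂_of_le x rfl le_rfl)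
  · rw [← show f x = l from hx]
    exact le_iSup (fun x => F x (f x)) x

lemma iSup_coe_add_neg_sInf_eq {α : Type*} {n : ℕ} (g : α → ℝ) (A : ℕ → Set α)
    (φ : ℕ → EReal) :
    ⨆ x, ((g x : EReal) + -sInf {v | ∃ l, l ≤ n ∧ x ∈ A l ∧ v = φ l})
      = ⨆ l : Fin (n + 1), ⨆ x ∈ A l, ((g x : EReal) + -φ l) := by
  refine le_antisymm (iSup_le fun x => EReal.add_le_of_forall_lt fun a ha b hb => ?_)
    (iSup_le fun l => iSup₂_le fun x hx => ?_)
  · obtain ⟨_, ⟨l, hl, hx, rfl⟩, hlt⟩ := sInf_lt_iff.1 (EReal.lt_neg_comm.1 hb)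
    exact (add_le_add ha.le (EReal.lt_neg_comm.1 hlt).le).trans
      (le_iSup_of_le ⟨l, Nat.lt_succ_of_le hl⟩ (le_iSup₂_of_le x hx le_rfl))
  · exact le_iSup_of_le x (add_le_add le_rfl
      (EReal.neg_le_neg_iff.2 (sInf_le ⟨l, Nat.lt_succ_iff.1 l.2, hx, rfl⟩)))

variable {N : (Fin d → ℝ) → ℝ}

lemma capraConj_comp_ell0 (hN : IsNorm N) (φ : ℕ → EReal) (y : Fin d → ℝ) :
    capraConj N (fun z => φ (ell0 z)) y
      = ⨆ l : Fin (d + 1), ((dualCoord N l y : EReal) + -φ l) := by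
  rw [capraConj, iSup_eq_iSup_fin_biSup ell0 ell0_le fun x l => (capra N x y : EReal) + -φ l]
  exact iSup_congr fun l =>
    biSup_coe_add_eq_of_isLUB (isLUB_capra_ell0_eq hN (Nat.lt_succ_iff.1 l.2) y) _

lemma fenchelConj_sInf_eq {A : ℕ → Set (Fin d → ℝ)} {y : Fin d → ℝ} {c : ℕ → ℝ}
    (hA : ∀ l ≤ d, IsLUB ((fun x => dotp x y) '' A l) (c l)) (φ : ℕ → EReal) :
    fenchelConj (fun x => sInf {v : EReal | ∃ l : ℕ, l ≤ d ∧ x ∈ A l ∧ v = φ l}) y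
      = ⨆ l : Fin (d + 1), ((c l : EReal) + -φ l) := by
  rw [fenchelConj, iSup_coe_add_neg_sInf_eq (fun x => dotp x y)]
  exact iSup_congr fun l => biSup_coe_add_eq_of_isLUB (hA l (Nat.lt_succ_iff.1 l.2)) _

lemma capraBiconj_eq_fenchelConj_capraConj (f : (Fin d → ℝ) → EReal) (x : Fin d → ℝ) :
    capraBiconj N f x = fenchelConj (capraConj N f) ((N x)⁻¹ • x) :=
  iSup_congr fun y => by rw [capra_eq_div, dotp_smul_right, dotp_comm y x, div_eq_inv_mul]

lemma fenchelBiconj_eq_fenchelConj_fenchelConj (g : (Fin d → ℝ) → EReal) :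
    fenchelBiconj g = fenchelConj (fenchelConj g) :=
  funext fun x => iSup_congr fun y => by rw [dotp_comm]

end Conjugates

theorem statement11 {d : ℕ} (N : (Fin d → ℝ) → ℝ) (hN : IsNorm N) (φ : ℕ → EReal) :
    (∀ x : Fin d → ℝ, x ≠ 0 →
        capraBiconj N (fun z => φ (ell0 z)) x
          = fenchelConj (capraConj N (fun z => φ (ell0 z))) ((N x)⁻¹ • x)) ∧
      (fenchelConj (capraConj N (fun z => φ (ell0 z)))
        = fenchelBiconj (fun x =>
            sInf {v : EReal | ∃ l : ℕ, l ≤ d ∧ x ∈ coordBall N l ∧ v = φ l})) ∧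
      (fenchelConj (capraConj N (fun z => φ (ell0 z)))
        = fenchelBiconj (fun x =>
            sInf {v : EReal | ∃ l : ℕ, l ≤ d ∧ x ∈ coordSphere N l ∧ v = φ l})) := by
  have hconj (A : ℕ → Set (Fin d → ℝ))
      (hA : ∀ l ≤ d, ∀ y, IsLUB ((fun x => dotp x y) '' A l) (dualCoord N l y)) :
      capraConj N (fun z => φ (ell0 z))
        = fenchelConj (fun x => sInf {v : EReal | ∃ l : ℕ, l ≤ d ∧ x ∈ A l ∧ v = φ l}) :=
    funext fun y =>
      (capraConj_comp_ell0 hN φ y).trans (fenchelConj_sInf_eq (fun l hl => hA l hl y) φ).symm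
  refine ⟨fun x _ => capraBiconj_eq_fenchelConj_capraConj _ x, ?_, ?_⟩
  · rw [hconj _ fun l _ => isLUB_dotp_coordBall hN l, fenchelBiconj_eq_fenchelConj_fenchelConj]
  · rw [hconj _ fun l hl => isLUB_dotp_coordSphere hN hl, fenchelBiconj_eq_fenchelConj_fenchelConj]
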